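/- Let D be a maximal Arrow's single-peaked domain on a set A of size m ≥ 3 and let x ∉ A. Then for every order W ∈ D there is exactly one maximal Arrow's single-peaked domain E on A ∪ {x} such that x is a terminal element of E, the domain contraction of E on A equals D, and E contains the order (x,W) obtained by placing x first followed by W. -/

import Mathlib

/-- A list `l` represents a linear order on the finite set `A`:
it is duplicate-free and its members are exactly the elements of `A`,
listed from most to least preferred. -/
def IsLinOrd {α : Type*} (A : Finset α) (l : List α) : Prop :=
  l.Nodup ∧ ∀ a : α, a ∈ l ↔ a ∈ A

/-- The restriction of the order `l` to the subset `S`. -/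
def restrictList {α : Type*} [DecidableEq α] (l : List α) (S : Finset α) : List α :=
  l.filter (fun a => a ∈ S)

/-- The domain contraction of `D` on `S`: the set of restrictions to `S`
of the orders in `D` (as a set, so duplicates are automatically removed). -/
def contraction {α : Type*} [DecidableEq α] (D : Set (List α)) (S : Finset α) :
    Set (List α) :=
  (fun l => restrictList l S) '' D

/-- `D` contains a Condorcet triple: elements `a, b, c` and orders
`v₁, v₂, v₃ ∈ D` restricting on `{a,b,c}` to `a≻b≻c`, `b≻c≻a`, `c≻a≻b`. -/
def CondorcetTriple {α : Type*} [DecidableEq α] (D : Set (List α)) : Prop :=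
  ∃ a b c : α, a ≠ b ∧ a ≠ c ∧ b ≠ c ∧
    ∃ v₁ ∈ D, ∃ v₂ ∈ D, ∃ v₃ ∈ D,
      restrictList v₁ {a, b, c} = [a, b, c] ∧
      restrictList v₂ {a, b, c} = [b, c, a] ∧
      restrictList v₃ {a, b, c} = [c, a, b]

/-- A Condorcet domain on `A`: a set of linear orders on `A` with no Condorcet triple. -/
def IsCondorcetDomain {α : Type*} [DecidableEq α] (A : Finset α) (D : Set (List α)) : Prop :=
  (∀ l ∈ D, IsLinOrd A l) ∧ ¬ CondorcetTriple D

/-- A maximal Condorcet domain on `A`: no strict superset is a Condorcet domain on `A`. -/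
def IsMaxCondorcetDomain {α : Type*} [DecidableEq α] (A : Finset α) (D : Set (List α)) : Prop :=
  IsCondorcetDomain A D ∧ ∀ D' : Set (List α), IsCondorcetDomain A D' → D ⊆ D' → D' = D

/-- `x` is a never-bottom element of the triple `T` for `D`:
no order of `D` ranks `x` below both other elements of `T`. -/
def NeverBottom {α : Type*} [DecidableEq α] (D : Set (List α)) (T : Finset α) (x : α) : Prop :=
  x ∈ T ∧ ∀ l ∈ D, (restrictList l T).getLast? ≠ some x

/-- An Arrow's single-peaked domain on `A`: a Condorcet domain such that every
3-element subset of `A` has a never-bottom element. -/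
def IsArrowSP {α : Type*} [DecidableEq α] (A : Finset α) (D : Set (List α)) : Prop :=
  IsCondorcetDomain A D ∧
    ∀ T : Finset α, T ⊆ A → T.card = 3 → ∃ x : α, NeverBottom D T x

/-- A maximal Arrow's single-peaked domain on `A`. -/
def IsMaxArrowSP {α : Type*} [DecidableEq α] (A : Finset α) (D : Set (List α)) : Prop :=
  IsMaxCondorcetDomain A D ∧ IsArrowSP A D

/-- `a` is a terminal element of `D`: some order of `D` ends with (least element) `a`. -/
def TerminalElt {α : Type*} (D : Set (List α)) (a : α) : Prop :=
  ∃ l ∈ D, l.getLast? = some a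

/-- `l` is an extremal order of `D`: `l ∈ D`, and the first and last elements of `l`
are the two terminal elements of `D`. -/
def IsExtremal {α : Type*} (D : Set (List α)) (l : List α) : Prop :=
  l ∈ D ∧ ∃ s t : α, s ≠ t ∧ l.head? = some s ∧ l.getLast? = some t ∧
    TerminalElt D s ∧ TerminalElt D t ∧ ∀ a : α, TerminalElt D a → a = s ∨ a = t

/-- The position of `a` in the order `l`, the first element being in position 1. -/
def posIn {α : Type*} [DecidableEq α] (l : List α) (a : α) : ℕ :=
  l.idxOf a + 1

/-!
Every valid `E` is contained in the domain `terminalExtension A D x W` of all orders over `D`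
in which, whenever `a` is above `b` in `W`, `a` is not last on `{x, a, b}`: a never-bottom
element of `{x, a, b}` in `E` is neither `x`, which is terminal, nor `b`, which is last in
`(x, W)`. Maximality of `E` then forces equality, once this domain is known to be a maximal
Arrow's single-peaked domain. It has no Condorcet cycle: one avoiding `x` restricts to a cycle
of `D`, and one through `x` breaks a constraint whichever way `W` ranks the other two elements.
It is maximal because an order outside it either restricts to an order outside `D`, which by
maximality of `D` closes a cycle that lifts by appending `x`, or puts some `a` last on
`{x, a, b}`, which closes a cycle on `{x, a, b}` with the orders that insert `x` into `W`
first, last, or right after `a`.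
-/

open scoped List

theorem List.pair_sublist_or {α : Type*} {l : List α} {a b : α} (ha : a ∈ l) (hb : b ∈ l)
    (hab : a ≠ b) : [a, b] <+ l ∨ [b, a] <+ l := by
  obtain ⟨l₁, l₂, rfl⟩ := List.append_of_mem ha
  rcases List.mem_append.mp hb with hb | hb
  · exact Or.inr ((List.singleton_sublist.mpr hb).append
      (List.cons_sublist_cons.mpr (List.nil_sublist _)))
  · exact Or.inl (List.sublist_append_of_sublist_right
      (List.cons_sublist_cons.mpr (List.singleton_sublist.mpr
        ((List.mem_cons.mp hb).resolve_left hab.symm))))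

theorem List.getLast?_append_cons_ne {α : Type*} {l₁ l₂ : List α} {x a b : α}
    (h : l₁ ++ l₂ = [a, b]) (hxa : x ≠ a) (hab : a ≠ b) :
    (l₁ ++ x :: l₂).getLast? ≠ some a := by
  rcases List.eq_nil_or_concat' l₂ with rfl | ⟨L, y, rfl⟩
  · simpa using hxa
  · obtain rfl : y = b := by simpa [← List.append_assoc] using congrArg List.getLast? h
    rw [← List.cons_append, ← List.append_assoc, List.getLast?_concat]
    simpa using hab.symm

section RestrictList
variable {α : Type*} [DecidableEq α]

theorem mem_restrictList {l : List α} {S : Finset α} {c : α} :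
    c ∈ restrictList l S ↔ c ∈ l ∧ c ∈ S := by
  simp [restrictList]

theorem restrictList_sublist (l : List α) (S : Finset α) : restrictList l S <+ l :=
  List.filter_sublist

theorem restrictList_append (l₁ l₂ : List α) (S : Finset α) :
    restrictList (l₁ ++ l₂) S = restrictList l₁ S ++ restrictList l₂ S :=
  List.filter_append ..

theorem restrictList_cons_of_mem {l : List α} {S : Finset α} {a : α} (ha : a ∈ S) :
    restrictList (a :: l) S = a :: restrictList l S := by
  simp [restrictList, ha]

theorem restrictList_cons_of_notMem {l : List α} {S : Finset α} {a : α} (ha : a ∉ S) :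
    restrictList (a :: l) S = restrictList l S := by
  simp [restrictList, ha]

theorem restrictList_eq_self {l : List α} {S : Finset α} (h : ∀ a ∈ l, a ∈ S) :
    restrictList l S = l :=
  List.filter_eq_self.mpr (by simpa using h)

theorem restrictList_restrictList {l : List α} {S T : Finset α} (h : T ⊆ S) :
    restrictList (restrictList l S) T = restrictList l T := by
  simp only [restrictList, List.filter_filter]
  exact List.filter_congr fun c _ => by by_cases hc : c ∈ T <;> simp [hc, h _]

theorem restrictList_eq_of_sublist {l s : List α} {T : Finset α} (hl : l.Nodup)
    (hs : s <+ l) (hT : ∀ c ∈ l, c ∈ T ↔ c ∈ s) : restrictList l T = s := by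
  have hsT : s <+ restrictList l T := by
    have := hs.filter (fun c => decide (c ∈ T))
    rwa [List.filter_eq_self.mpr fun c hc => by simpa using (hT c (hs.subset hc)).mpr hc] at this
  refine (hsT.eq_of_length_le ?_).symm
  refine (List.subperm_of_subset (hl.sublist (restrictList_sublist l T)) fun c hc => ?_).length_le
  rw [mem_restrictList] at hc
  exact (hT c hc.1).mp hc.2

theorem getLast?_restrictList {l : List α} {S : Finset α} {a : α}
    (hl : l.getLast? = some a) (ha : a ∈ S) : (restrictList l S).getLast? = some a := by
  obtain ⟨l', rfl⟩ := List.getLast?_eq_some_iff.mp hl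
  simp [restrictList, ha]

theorem IsLinOrd.restrictList_of_subset {A B : Finset α} {l : List α} (hl : IsLinOrd B l)
    (h : A ⊆ B) : IsLinOrd A (restrictList l A) :=
  ⟨hl.1.sublist (restrictList_sublist l A), fun c => by
    rw [mem_restrictList, hl.2]; exact ⟨And.right, fun hc => ⟨h hc, hc⟩⟩⟩

theorem IsLinOrd.restrictList_self {A : Finset α} {l : List α} (hl : IsLinOrd A l) :
    restrictList l A = l :=
  restrictList_eq_self fun c hc => (hl.2 c).mp hc

theorem IsLinOrd.eq_of_getLast? {x a b : α} {t : List α} (ht : IsLinOrd {x, a, b} t)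
    (hxa : x ≠ a) (hxb : x ≠ b) (hab : a ≠ b) (hlast : t.getLast? = some a) :
    t = [x, b, a] ∨ t = [b, x, a] := by
  have hlen : t.length = 3 := by
    rw [← List.toFinset_card_of_nodup ht.1, show t.toFinset = {x, a, b} by ext; simp [ht.2],
      Finset.card_eq_three.mpr ⟨x, a, b, hxa, hxb, hab, rfl⟩]
  obtain ⟨p, q, r, rfl⟩ := List.length_eq_three.mp hlen
  obtain rfl : r = a := by simpa using hlast
  have hnd := ht.1
  have hp := ht.2 p
  have hq := ht.2 q
  have hx := ht.2 x
  have hb := ht.2 b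
  simp only [List.mem_cons, List.not_mem_nil, or_false, Finset.mem_insert, Finset.mem_singleton,
    List.nodup_cons] at hnd hp hq hx hb
  grind

theorem restrictList_insert_of_notMem {l₁ l₂ : List α} {S : Finset α} {x : α}
    (hx : x ∉ S) : restrictList (l₁ ++ x :: l₂) S = restrictList (l₁ ++ l₂) S := by
  rw [restrictList_append, restrictList_cons_of_notMem hx, restrictList_append]

theorem IsLinOrd.append_cons_of_notMem {A : Finset α} {l₁ l₂ : List α} {x : α}
    (hl : IsLinOrd A (l₁ ++ l₂)) (hx : x ∉ A) :
    IsLinOrd (insert x A) (l₁ ++ x :: l₂) := by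
  have hxl : x ∉ l₁ ++ l₂ := fun h => hx ((hl.2 x).mp h)
  refine ⟨List.perm_middle.nodup_iff.mpr (List.nodup_cons.mpr ⟨hxl, hl.1⟩), fun c => ?_⟩
  rw [List.perm_middle.mem_iff, List.mem_cons, hl.2, Finset.mem_insert]

theorem IsLinOrd.restrictList_append_of_notMem {A : Finset α} {u : List α} {x : α}
    (hu : IsLinOrd A u) (hx : x ∉ A) : restrictList (u ++ [x]) A = u := by
  rw [restrictList_insert_of_notMem hx, List.append_nil, hu.restrictList_self]

end RestrictList

section TerminalExtension
variable {α : Type*} [DecidableEq α]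

def terminalExtension (A : Finset α) (D : Set (List α)) (x : α) (W : List α) :
    Set (List α) :=
  {l | IsLinOrd (insert x A) l ∧ restrictList l A ∈ D ∧
    ∀ a b, [a, b] <+ W → (restrictList l {x, a, b}).getLast? ≠ some a}

variable {A : Finset α} {D : Set (List α)} {x : α} {W : List α}

theorem append_mem_terminalExtension {u : List α} (hx : x ∉ A) (hxW : x ∉ W)
    (hu : IsLinOrd A u) (huD : u ∈ D) : u ++ [x] ∈ terminalExtension A D x W := by
  refine ⟨IsLinOrd.append_cons_of_notMem (by simpa using hu) hx, ?_, fun a b hab => ?_⟩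
  · rwa [hu.restrictList_append_of_notMem hx]
  · rw [getLast?_restrictList List.getLast?_concat (by simp)]
    exact fun h => hxW (Option.some_injective _ h ▸ hab.subset (by simp))

theorem insert_mem_terminalExtension {l₁ l₂ : List α} (hx : x ∉ A) (hW : IsLinOrd A W)
    (hWD : W ∈ D) (hsplit : W = l₁ ++ l₂) :
    l₁ ++ x :: l₂ ∈ terminalExtension A D x W := by
  subst hsplit
  refine ⟨hW.append_cons_of_notMem hx, ?_, fun a b hab => ?_⟩
  · rwa [restrictList_insert_of_notMem hx, hW.restrictList_self]
  have hxW : x ∉ l₁ ++ l₂ := fun h => hx ((hW.2 x).mp h)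
  have hpair : restrictList (l₁ ++ l₂) {x, a, b} = [a, b] :=
    restrictList_eq_of_sublist hW.1 hab fun c hc => by
      have : c ≠ x := fun h => hxW (h ▸ hc)
      simp [this]
  rw [restrictList_append, restrictList_cons_of_mem (by simp)]
  rw [restrictList_append] at hpair
  have hab' : a ≠ b := by simpa using hW.1.sublist hab
  exact List.getLast?_append_cons_ne hpair (fun h => hxW (h ▸ hab.subset (by simp))) hab'

theorem restrictList_cons_eq_of_sublist {x a b : α} (hxW : (x :: W).Nodup)
    (hab : [a, b] <+ W) : restrictList (x :: W) {x, a, b} = [x, a, b] :=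
  restrictList_eq_of_sublist hxW (List.cons_sublist_cons.mpr hab) fun c _ => by simp

theorem neverBottom_terminalExtension {a b : α} (hab : [a, b] <+ W) :
    NeverBottom (terminalExtension A D x W) {x, a, b} a :=
  ⟨by simp, fun _ hl => hl.2.2 a b hab⟩

theorem terminalExtension_not_cycle {v v' : List α} {T : Finset α} {b c : α}
    (hW : IsLinOrd A W) (hv : v ∈ terminalExtension A D x W)
    (hv' : v' ∈ terminalExtension A D x W) (hT : T = {x, b, c}) (hb : b ∈ A) (hc : c ∈ A)
    (hbc : b ≠ c) (h₁ : restrictList v T = [x, b, c]) (h₃ : restrictList v' T = [c, x, b]) :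
    False := by
  subst hT
  rcases List.pair_sublist_or ((hW.2 b).mpr hb) ((hW.2 c).mpr hc) hbc with h | h
  · exact hv'.2.2 b c h (by rw [h₃]; rfl)
  · exact hv.2.2 c b h (by rw [Finset.pair_comm c b, h₁]; rfl)

theorem terminalExtension_not_condorcetTriple (hW : IsLinOrd A W)
    (hD : ¬ CondorcetTriple D) : ¬ CondorcetTriple (terminalExtension A D x W) := by
  rintro ⟨a, b, c, hab, hac, hbc, v₁, hv₁, v₂, hv₂, v₃, hv₃, h₁, h₂, h₃⟩
  have hmem : ∀ y ∈ ({a, b, c} : Finset α), y ≠ x → y ∈ A := fun y hy hyx => by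
    have : y ∈ restrictList v₁ {a, b, c} := by rw [h₁]; simpa using hy
    simpa [hyx] using (hv₁.1.2 y).mp (mem_restrictList.mp this).1
  by_cases hxa : x = a
  · subst hxa
    exact terminalExtension_not_cycle hW hv₁ hv₃ rfl (hmem b (by simp) hab.symm)
      (hmem c (by simp) hac.symm) hbc h₁ h₃
  by_cases hxb : x = b
  · subst hxb
    exact terminalExtension_not_cycle hW hv₂ hv₁ (by ext; simp; tauto)
      (hmem c (by simp) hbc.symm) (hmem a (by simp) hab) hac.symm h₂ h₁
  by_cases hxc : x = c
  · subst hxc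
    exact terminalExtension_not_cycle hW hv₃ hv₂ (by ext; simp; tauto)
      (hmem a (by simp) hac) (hmem b (by simp) hbc) hab h₃ h₂
  have hA : {a, b, c} ⊆ A := fun y hy => hmem y hy (by rintro rfl; simp_all)
  exact hD ⟨a, b, c, hab, hac, hbc, _, hv₁.2.1, _, hv₂.2.1, _, hv₃.2.1,
    by rwa [restrictList_restrictList hA], by rwa [restrictList_restrictList hA],
    by rwa [restrictList_restrictList hA]⟩

theorem terminalExtension_neverBottom (hW : IsLinOrd A W)
    (hD : ∀ T ⊆ A, T.card = 3 → ∃ n, NeverBottom D T n) (T : Finset α)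
    (hT : T ⊆ insert x A) (hT3 : T.card = 3) :
    ∃ n, NeverBottom (terminalExtension A D x W) T n := by
  by_cases hxT : x ∈ T
  · obtain ⟨a, b, hab, hT'⟩ := Finset.card_eq_two.mp
      (by rw [Finset.card_erase_of_mem hxT, hT3] : (T.erase x).card = 2)
    have hA : ∀ y ∈ T.erase x, y ∈ W := fun y hy =>
      (hW.2 y).mpr ((Finset.mem_insert.mp (hT (Finset.mem_of_mem_erase hy))).resolve_left
        (Finset.ne_of_mem_erase hy))
    rw [← Finset.insert_erase hxT, hT']
    rcases List.pair_sublist_or (hA a (by simp [hT'])) (hA b (by simp [hT'])) hab with h | h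
    · exact ⟨a, neverBottom_terminalExtension h⟩
    · exact ⟨b, Finset.pair_comm a b ▸ neverBottom_terminalExtension h⟩
  · have hTA : T ⊆ A := fun y hy =>
      (Finset.mem_insert.mp (hT hy)).resolve_left fun h => hxT (h ▸ hy)
    obtain ⟨n, hnT, hn⟩ := hD T hTA hT3
    exact ⟨n, hnT, fun l hl => restrictList_restrictList hTA ▸ hn _ hl.2.1⟩

theorem CondorcetTriple.of_restrictList {S S' : Set (List α)}
    (h : ∀ v ∈ S, ∃ v' ∈ S', restrictList v' A = v) (hS : CondorcetTriple S) :
    CondorcetTriple S' := by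
  obtain ⟨a, b, c, hab, hac, hbc, v₁, hv₁, v₂, hv₂, v₃, hv₃, h₁, h₂, h₃⟩ := hS
  obtain ⟨w₁, hw₁, rfl⟩ := h v₁ hv₁
  obtain ⟨w₂, hw₂, rfl⟩ := h v₂ hv₂
  obtain ⟨w₃, hw₃, rfl⟩ := h v₃ hv₃
  have hA : {a, b, c} ⊆ A := fun y hy => by
    have : y ∈ restrictList (restrictList w₁ A) {a, b, c} := by rw [h₁]; simpa using hy
    exact (mem_restrictList.mp (mem_restrictList.mp this).1).2
  rw [restrictList_restrictList hA] at h₁ h₂ h₃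
  exact ⟨a, b, c, hab, hac, hbc, w₁, hw₁, w₂, hw₂, w₃, hw₃, h₁, h₂, h₃⟩

theorem restrictList_mem_of_terminalExtension_subset (hx : x ∉ A) (hxW : x ∉ W)
    (hD : IsMaxCondorcetDomain A D) {D' : Set (List α)}
    (hD' : IsCondorcetDomain (insert x A) D') (hsub : terminalExtension A D x W ⊆ D')
    {l : List α} (hl : l ∈ D') : restrictList l A ∈ D := by
  have hlA : IsLinOrd A (restrictList l A) :=
    (hD'.1 l hl).restrictList_of_subset (Finset.subset_insert x A)
  by_contra hlD
  have hCT : CondorcetTriple (D ∪ {restrictList l A}) := by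
    by_contra hCT
    refine hlD ((hD.2 _ ⟨?_, hCT⟩ Set.subset_union_left).subset (Or.inr rfl))
    rintro v (hv | rfl)
    exacts [hD.1.1 v hv, hlA]
  refine hD'.2 (hCT.of_restrictList (A := A) ?_)
  rintro v (hv | rfl)
  · exact ⟨v ++ [x], hsub (append_mem_terminalExtension hx hxW (hD.1.1 v hv) hv),
      (hD.1.1 v hv).restrictList_append_of_notMem hx⟩
  · exact ⟨l, hl, rfl⟩

theorem mem_terminalExtension_of_subset (hx : x ∉ A) (hW : IsLinOrd A W) (hWD : W ∈ D)
    (hD : IsMaxCondorcetDomain A D) {D' : Set (List α)}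
    (hD' : IsCondorcetDomain (insert x A) D') (hsub : terminalExtension A D x W ⊆ D')
    {l : List α} (hl : l ∈ D') : l ∈ terminalExtension A D x W := by
  have hxW : x ∉ W := fun h => hx ((hW.2 x).mp h)
  have hlA := restrictList_mem_of_terminalExtension_subset hx hxW hD hD' hsub hl
  refine ⟨hD'.1 l hl, hlA, fun a b hab hlast => ?_⟩
  have ha : a ∈ A := (hW.2 a).mp (hab.subset (by simp))
  have hb : b ∈ A := (hW.2 b).mp (hab.subset (by simp))
  have hab' : a ≠ b := by simpa using hW.1.sublist hab
  have hxa : x ≠ a := fun h => hx (h ▸ ha)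
  have hxb : x ≠ b := fun h => hx (h ▸ hb)
  have ht : IsLinOrd {x, a, b} (restrictList l {x, a, b}) :=
    (hD'.1 l hl).restrictList_of_subset
      (Finset.insert_subset_insert x (by simp [Finset.insert_subset_iff, ha, hb]))
  rcases ht.eq_of_getLast? hxa hxb hab' hlast with h | h
  · -- `l` ranks `x ≻ b ≻ a`; inserting `x` right after `a` in `W` gives `a ≻ x ≻ b`
    obtain ⟨l₁, l₂, hsplit, ha₁, hb₂⟩ := List.cons_sublist_iff.mp hab
    have hba : [b, a] <+ restrictList l A := by
      have : [b, a] <+ l := (List.sublist_cons_self x _).trans (h ▸ restrictList_sublist l _)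
      simpa [restrictList, ha, hb] using this.filter (fun c => decide (c ∈ A))
    have hu := hsub (append_mem_terminalExtension hx hxW
      ((hD'.1 l hl).restrictList_of_subset (Finset.subset_insert x A)) hlA)
    have hins := hsub (insert_mem_terminalExtension hx hW hWD hsplit)
    refine hD'.2 ⟨x, b, a, hxb, hxa, hab'.symm, l, hl, _, hu, _, hins,
      by rw [Finset.pair_comm b a, h], ?_, ?_⟩
    · exact restrictList_eq_of_sublist (hD'.1 _ hu).1 (hba.append (List.Sublist.refl [x]))
        fun c _ => by simp; tauto
    · exact restrictList_eq_of_sublist (hD'.1 _ hins).1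
        ((List.singleton_sublist.mpr ha₁).append (List.cons_sublist_cons.mpr hb₂))
        fun c _ => by simp; tauto
  · exact hD'.2 ⟨x, a, b, hxa, hxb, hab',
      x :: W, hsub (insert_mem_terminalExtension (l₁ := []) hx hW hWD rfl),
      W ++ [x], hsub (insert_mem_terminalExtension (l₂ := []) hx hW hWD (by simp)),
      l, hl, restrictList_cons_eq_of_sublist (List.nodup_cons.mpr ⟨hxW, hW.1⟩) hab,
      restrictList_eq_of_sublist (hW.1.append (List.nodup_singleton x) (by simpa using hxW))
        (hab.append (List.Sublist.refl [x])) fun c _ => by simp; tauto,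
      h⟩

theorem isMaxArrowSP_terminalExtension (hx : x ∉ A) (hD : IsMaxArrowSP A D) (hWD : W ∈ D) :
    IsMaxArrowSP (insert x A) (terminalExtension A D x W) := by
  have hW : IsLinOrd A W := hD.1.1.1 W hWD
  have hCD : IsCondorcetDomain (insert x A) (terminalExtension A D x W) :=
    ⟨fun _ hl => hl.1, terminalExtension_not_condorcetTriple hW hD.1.1.2⟩
  refine ⟨⟨hCD, fun D' hD' hsub => ?_⟩, hCD, terminalExtension_neverBottom hW hD.2.2⟩
  exact hsub.antisymm' fun l hl => mem_terminalExtension_of_subset hx hW hWD hD.1 hD' hsub hl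

theorem contraction_terminalExtension (hx : x ∉ A) (hxW : x ∉ W)
    (hD : ∀ u ∈ D, IsLinOrd A u) : contraction (terminalExtension A D x W) A = D := by
  refine subset_antisymm (Set.image_subset_iff.mpr fun l hl => hl.2.1) fun u hu => ?_
  exact ⟨u ++ [x], append_mem_terminalExtension hx hxW (hD u hu) hu,
    (hD u hu).restrictList_append_of_notMem hx⟩

theorem terminalElt_terminalExtension (hx : x ∉ A) (hW : IsLinOrd A W) (hWD : W ∈ D) :
    TerminalElt (terminalExtension A D x W) x :=
  ⟨W ++ [x], insert_mem_terminalExtension (l₂ := []) hx hW hWD (by simp),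
    List.getLast?_concat⟩

theorem cons_mem_terminalExtension (hx : x ∉ A) (hW : IsLinOrd A W) (hWD : W ∈ D) :
    x :: W ∈ terminalExtension A D x W :=
  insert_mem_terminalExtension (l₁ := []) hx hW hWD rfl

theorem subset_terminalExtension (hx : x ∉ A) (hW : IsLinOrd A W) {E : Set (List α)}
    (hE : IsArrowSP (insert x A) E) (hterm : TerminalElt E x) (hcon : contraction E A = D)
    (hxWE : x :: W ∈ E) : E ⊆ terminalExtension A D x W := by
  intro l hl
  refine ⟨hE.1.1 l hl, hcon ▸ ⟨l, hl, rfl⟩, fun a b hab => ?_⟩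
  have ha : a ∈ A := (hW.2 a).mp (hab.subset (by simp))
  have hb : b ∈ A := (hW.2 b).mp (hab.subset (by simp))
  have hab' : a ≠ b := by simpa using hW.1.sublist hab
  have hxa : x ≠ a := fun h => hx (h ▸ ha)
  have hxb : x ≠ b := fun h => hx (h ▸ hb)
  obtain ⟨n, hnT, hn⟩ := hE.2 {x, a, b}
    (Finset.insert_subset_insert x (by simp [Finset.insert_subset_iff, ha, hb]))
    (Finset.card_eq_three.mpr ⟨x, a, b, hxa, hxb, hab', rfl⟩)
  obtain ⟨l₀, hl₀, hlast⟩ := hterm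
  rcases Finset.mem_insert.mp hnT with rfl | hnT
  · exact absurd (getLast?_restrictList hlast (by simp)) (hn l₀ hl₀)
  rcases Finset.mem_insert.mp hnT with rfl | hnT
  · exact hn l hl
  · rw [Finset.mem_singleton.mp hnT] at hn
    refine absurd ?_ (hn _ hxWE)
    rw [restrictList_cons_eq_of_sublist (hE.1.1 _ hxWE).1 hab]
    rfl

end TerminalExtension

theorem stmt_7_general {α : Type*} [DecidableEq α] (A : Finset α)
    (D : Set (List α)) (hD : IsMaxArrowSP A D) (x : α) (hx : x ∉ A)
    (W : List α) (hW : W ∈ D) :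
    ∃! E : Set (List α), IsMaxArrowSP (insert x A) E ∧ TerminalElt E x ∧
      contraction E A = D ∧ (x :: W) ∈ E := by
  have hWA : IsLinOrd A W := hD.1.1.1 W hW
  refine ⟨terminalExtension A D x W, ⟨isMaxArrowSP_terminalExtension hx hD hW,
    terminalElt_terminalExtension hx hWA hW,
    contraction_terminalExtension hx (fun h => hx ((hWA.2 x).mp h)) hD.1.1.1,
    cons_mem_terminalExtension hx hWA hW⟩, ?_⟩
  rintro E ⟨hE, hterm, hcon, hxWE⟩
  exact (hE.1.2 _ (isMaxArrowSP_terminalExtension hx hD hW).2.1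
    (subset_terminalExtension hx hWA hE.2 hterm hcon hxWE)).symm

/-- For each order `W` in a maximal Arrow's single-peaked domain `D` on a set of size
`m ≥ 3` and `x ∉ A`, there is exactly one maximal Arrow's single-peaked domain on
`A ∪ {x}` with `x` terminal, contracting to `D` on `A`, and containing `(x, W)`. -/
theorem stmt_7 {α : Type*} [DecidableEq α] (A : Finset α) (m : ℕ) (hm : A.card = m)
    (hm3 : 3 ≤ m) (D : Set (List α)) (hD : IsMaxArrowSP A D) (x : α) (hx : x ∉ A)
    (W : List α) (hW : W ∈ D) :
    ∃! E : Set (List α), IsMaxArrowSP (insert x A) E ∧ TerminalElt E x ∧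
      contraction E A = D ∧ (x :: W) ∈ E :=
  stmt_7_general A D hD x hx W hW
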